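/- (Rejection completeness of the derived validator, single step.) For every program p : Prog, all q, a : ℤ, and all sets v, v' of validation states with vstep_p q a v = some v': for every (vs', cs') ∈ v' and every assignment asgn' that satisfies cs', letting s' := fun k => asgn' (vs' k), there exist a validation state (vs, cs) ∈ v, a memory s : ℕ → ℤ, and an internal choice c : ℤ such that asgn' satisfies cs, vs^asgn' ≡ s, and sstep_p q c s = (a, s'). -/

import Mathlib

/-- Variables are natural numbers. -/
abbrev Var := ℕ

/-- Binary integer operations: +, −, ×, ÷ (integer division). -/
inductive Op
  | add | sub | mul | div
deriving DecidableEq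

def Op.denote : Op → ℤ → ℤ → ℤ
  | .add => (· + ·)
  | .sub => (· - ·)
  | .mul => (· * ·)
  | .div => (· / ·)

/-- Symbolic server expressions. -/
inductive SExp
  | const : ℤ → SExp
  | read : ℕ → SExp
  | bin : Op → SExp → SExp → SExp
deriving DecidableEq

/-- Evaluation of a server expression on a memory `s : ℕ → ℤ`, written `e^s`. -/
def SExp.eval (s : ℕ → ℤ) : SExp → ℤ
  | .const z => z
  | .read k => s k
  | .bin op e₁ e₂ => op.denote (e₁.eval s) (e₂.eval s)

/-- Validator expressions. -/
inductive VExp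
  | const : ℤ → VExp
  | var : Var → VExp
  | bin : Op → VExp → VExp → VExp
deriving DecidableEq

/-- Evaluation of a validator expression under an assignment, written `e^asgn`. -/
def VExp.eval (asgn : Var → ℤ) : VExp → ℤ
  | .const z => z
  | .var x => asgn x
  | .bin op e₁ e₂ => op.denote (e₁.eval asgn) (e₂.eval asgn)

/-- Symbolization `e^vs` of a server expression: replace every `read src` by `var (vs src)`. -/
def SExp.symb (vs : ℕ → Var) : SExp → VExp
  | .const z => .const z
  | .read k => .var (vs k)
  | .bin op e₁ e₂ => .bin op (e₁.symb vs) (e₂.symb vs)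

/-- Comparison operators for constraints: <, ≤, =. -/
inductive Cmp
  | lt | le | eq
deriving DecidableEq

def Cmp.holds : Cmp → ℤ → ℤ → Prop
  | .lt => (· < ·)
  | .le => (· ≤ ·)
  | .eq => (· = ·)

/-- A constraint is a triple of two validator expressions and a comparison. -/
structure Constraint where
  lhs : VExp
  cmp : Cmp
  rhs : VExp
deriving DecidableEq

/-- `asgn` satisfies the constraint set `cs`. -/
def Sat (asgn : Var → ℤ) (cs : Finset Constraint) : Prop :=
  ∀ c ∈ cs, c.cmp.holds (c.lhs.eval asgn) (c.rhs.eval asgn)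

/-- A variable occurs in a validator expression. -/
def VExp.occurs (x : Var) : VExp → Prop
  | .const _ => False
  | .var y => y = x
  | .bin _ e₁ e₂ => e₁.occurs x ∨ e₂.occurs x

/-- `x` is fresh for the constraint set `cs`: it occurs in no constraint of `cs`. -/
def FreshCs (x : Var) (cs : Finset Constraint) : Prop :=
  ∀ c ∈ cs, ¬ c.lhs.occurs x ∧ ¬ c.rhs.occurs x

/-- `x` is fresh for `vs : ℕ → Var`. -/
def FreshVs (x : Var) (vs : ℕ → Var) : Prop :=
  ∀ k : ℕ, vs k ≠ x

/-- One more than the largest variable occurring in a validator expression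
(a strict upper bound on its variables). -/
def VExp.maxVar : VExp → ℕ
  | .const _ => 0
  | .var x => x + 1
  | .bin _ e₁ e₂ => max e₁.maxVar e₂.maxVar

def Constraint.maxVar (c : Constraint) : ℕ :=
  max c.lhs.maxVar c.rhs.maxVar

/-- A validation state: a map from addresses to their representing variables
(with finite support, so that fresh variables exist), and a finite set of
constraints. -/
abbrev VState := (ℕ →₀ ℕ) × Finset Constraint

/-- A fixed variable fresh for both `vs` and `cs`. -/
def freshVar (vs : ℕ →₀ ℕ) (cs : Finset Constraint) : Var :=
  max (vs.support.sup ⇑vs) (cs.sup Constraint.maxVar) + 1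

/-- The write rule on validation states. -/
noncomputable def writeV (d : ℕ) (e : SExp) (w : VState) : VState :=
  let x := freshVar w.1 w.2
  (w.1.update d x, insert ⟨VExp.var x, Cmp.eq, e.symb w.1⟩ w.2)

/-- The havoc rule on validation states. -/
noncomputable def havocV (d : ℕ) (w : VState) : VState :=
  (w.1.update d (freshVar w.1 w.2), w.2)

/-- Programs in the `Prog` language. -/
inductive Prog
  | ret
  | write (dst : ℕ) (e : SExp) (p : Prog)
  | branch (e₁ e₂ : SExp) (p₁ p₂ : Prog)

/-- Semantics of `Prog` on integer memories. -/
def evalProg : Prog → (ℕ → ℤ) → (ℕ → ℤ)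
  | .ret, s => s
  | .write d e p, s => evalProg p (Function.update s d (e.eval s))
  | .branch e₁ e₂ p₁ p₂, s =>
      if e₁.eval s ≤ e₂.eval s then evalProg p₁ s else evalProg p₂ s

/-- The symbolic executor on validation states. -/
noncomputable def exec : Prog → VState → Finset VState
  | .ret, w => {w}
  | .write d e p, w => exec p (writeV d e w)
  | .branch e₁ e₂ p₁ p₂, w =>
      exec p₁ (w.1, insert ⟨e₁.symb w.1, Cmp.le, e₂.symb w.1⟩ w.2) ∪
      exec p₂ (w.1, insert ⟨e₂.symb w.1, Cmp.lt, e₁.symb w.1⟩ w.2)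

/-- A constraint set is solvable iff some assignment satisfies it. -/
def Solvable (cs : Finset Constraint) : Prop :=
  ∃ asgn : Var → ℤ, Sat asgn cs

/-- The step function of the server derived from program `p`:
write the choice to address 0 and the query to address 1, run `p`,
and answer with the value at address 1. -/
def sstepP (p : Prog) (q c : ℤ) (s : ℕ → ℤ) : ℤ × (ℕ → ℤ) :=
  let s₃ := evalProg p (Function.update (Function.update s 0 c) 1 q)
  (s₃ 1, s₃)

open Classical in
/-- The step function of the validator derived from program `p`. -/
noncomputable def vstepP (p : Prog) (q a : ℤ) (v : Finset VState) :
    Option (Finset VState) :=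
  let v' : Finset VState := v.biUnion (fun w =>
    let w₂ := writeV 1 (SExp.const q) (havocV 0 w)
    (exec p w₂).biUnion (fun w₃ =>
      let cs₄ := insert ⟨VExp.var (w₃.1 1), Cmp.eq, VExp.const a⟩ w₃.2
      if Solvable cs₄ then {(w₃.1, cs₄)} else ∅))
  if v' = ∅ then none else some v'

/-!
A model `asgn` of a path condition produced by symbolic execution reads, through `vs`, as a
memory `asgn ∘ vs`: each write constraint says the fresh variable holds the written value, and
each branch constraint says the concrete run takes that branch. So by induction on the program
the model of the final path condition is the concrete run from the memory it induces initially;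
the value it gives the havocked variable of address 0 is the server's internal choice.
-/

theorem SExp.eval_symb (e : SExp) (vs : ℕ → Var) (asgn : Var → ℤ) :
    (e.symb vs).eval asgn = e.eval (asgn ∘ vs) := by
  induction e <;> simp [SExp.symb, SExp.eval, VExp.eval, *]

theorem sat_insert_iff {asgn : Var → ℤ} {c : Constraint} {cs : Finset Constraint} :
    Sat asgn (insert c cs) ↔ c.cmp.holds (c.lhs.eval asgn) (c.rhs.eval asgn) ∧ Sat asgn cs :=
  Finset.forall_mem_insert _ _ _

theorem comp_havocV (asgn : Var → ℤ) (d : ℕ) (w : VState) :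
    asgn ∘ (havocV d w).1 = Function.update (asgn ∘ w.1) d (asgn (freshVar w.1 w.2)) := by
  rw [havocV, Finsupp.coe_update, Function.comp_update]

theorem sat_writeV {asgn : Var → ℤ} {d : ℕ} {e : SExp} {w : VState}
    (h : Sat asgn (writeV d e w).2) :
    Sat asgn w.2 ∧
      asgn ∘ (writeV d e w).1 = Function.update (asgn ∘ w.1) d (e.eval (asgn ∘ w.1)) := by
  obtain ⟨hx, hw⟩ := sat_insert_iff.mp h
  refine ⟨hw, ?_⟩
  simp only [Cmp.holds, VExp.eval, SExp.eval_symb] at hx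
  rw [writeV, Finsupp.coe_update, Function.comp_update, hx]

theorem sat_branch_le {asgn : Var → ℤ} {e₁ e₂ : SExp} {w : VState}
    (h : Sat asgn (insert ⟨e₁.symb w.1, Cmp.le, e₂.symb w.1⟩ w.2)) :
    Sat asgn w.2 ∧ e₁.eval (asgn ∘ w.1) ≤ e₂.eval (asgn ∘ w.1) := by
  obtain ⟨hle, hw⟩ := sat_insert_iff.mp h
  simp only [Cmp.holds, SExp.eval_symb] at hle
  exact ⟨hw, hle⟩

theorem sat_branch_lt {asgn : Var → ℤ} {e₁ e₂ : SExp} {w : VState}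
    (h : Sat asgn (insert ⟨e₂.symb w.1, Cmp.lt, e₁.symb w.1⟩ w.2)) :
    Sat asgn w.2 ∧ e₂.eval (asgn ∘ w.1) < e₁.eval (asgn ∘ w.1) := by
  obtain ⟨hlt, hw⟩ := sat_insert_iff.mp h
  simp only [Cmp.holds, SExp.eval_symb] at hlt
  exact ⟨hw, hlt⟩

theorem exec_sound (p : Prog) {w w₃ : VState} (hw₃ : w₃ ∈ exec p w) {asgn : Var → ℤ}
    (hsat : Sat asgn w₃.2) :
    Sat asgn w.2 ∧ asgn ∘ w₃.1 = evalProg p (asgn ∘ w.1) := by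
  induction p generalizing w with
  | ret =>
    rw [exec, Finset.mem_singleton] at hw₃
    subst hw₃
    exact ⟨hsat, rfl⟩
  | write d e p ih =>
    obtain ⟨hsat₁, hmem₁⟩ := ih hw₃
    obtain ⟨hsat₀, hwrite⟩ := sat_writeV hsat₁
    exact ⟨hsat₀, by rw [hmem₁, hwrite, evalProg]⟩
  | branch e₁ e₂ p₁ p₂ ih₁ ih₂ =>
    rcases Finset.mem_union.mp hw₃ with hw₃ | hw₃
    · obtain ⟨hsat₁, hmem₁⟩ := ih₁ hw₃
      obtain ⟨hsat₀, hle⟩ := sat_branch_le hsat₁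
      exact ⟨hsat₀, by rw [hmem₁, evalProg, if_pos hle]⟩
    · obtain ⟨hsat₁, hmem₁⟩ := ih₂ hw₃
      obtain ⟨hsat₀, hlt⟩ := sat_branch_lt hsat₁
      exact ⟨hsat₀, by rw [hmem₁, evalProg, if_neg (not_le.mpr hlt)]⟩

theorem mem_of_vstepP_eq_some {p : Prog} {q a : ℤ} {v v' : Finset VState}
    (hv : vstepP p q a v = some v') {w' : VState} (hw' : w' ∈ v') :
    ∃ w ∈ v, ∃ w₃ ∈ exec p (writeV 1 (SExp.const q) (havocV 0 w)),
      w' = (w₃.1, insert ⟨VExp.var (w₃.1 1), Cmp.eq, VExp.const a⟩ w₃.2) := by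
  dsimp only [vstepP] at hv
  split_ifs at hv
  obtain rfl := Option.some_inj.mp hv
  obtain ⟨w, hw, hw'⟩ := Finset.mem_biUnion.mp hw'
  obtain ⟨w₃, hw₃, hw'⟩ := Finset.mem_biUnion.mp hw'
  split_ifs at hw'
  · exact ⟨w, hw, w₃, hw₃, Finset.mem_singleton.mp hw'⟩
  · simp at hw'

/-- Rejection completeness of the derived validator, single step. -/
theorem derived_validator_complete_step
    (p : Prog) (q a : ℤ) (v v' : Finset VState)
    (hv : vstepP p q a v = some v') :
    ∀ w' ∈ v', ∀ asgn' : Var → ℤ, Sat asgn' w'.2 →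
      ∃ w ∈ v, ∃ (s : ℕ → ℤ) (c : ℤ),
        Sat asgn' w.2 ∧ (∀ k : ℕ, asgn' (w.1 k) = s k) ∧
        sstepP p q c s = (a, fun k => asgn' (w'.1 k)) := by
  intro w' hw' asgn' hsat'
  obtain ⟨w, hw, w₃, hw₃, rfl⟩ := mem_of_vstepP_eq_some hv hw'
  obtain ⟨hanswer, hsat₃⟩ := sat_insert_iff.mp hsat'
  obtain ⟨hsat₂, hrun⟩ := exec_sound p hw₃ hsat₃
  obtain ⟨hsat₁, hquery⟩ := sat_writeV hsat₂
  rw [hquery, comp_havocV, SExp.eval] at hrun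
  simp only [Cmp.holds, VExp.eval] at hanswer
  refine ⟨w, hw, asgn' ∘ w.1, asgn' (freshVar w.1 w.2), hsat₁, fun _ => rfl, ?_⟩
  rw [sstepP, ← hrun]
  exact Prod.ext hanswer rfl
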